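/- For the GUE correlation kernel K_N(x,y) = Σ_{n=0}^{N-1} ψ_n(x)ψ_n(y)/(p_n,p_n) with ψ_n(x) = e^{-x²/2}·2^{-n}H_n(x), the diagonal derivative identity holds: d/dt K_N(t,t) = -(2/(p_{N-1},p_{N-1})) ψ_N(t) ψ_{N-1}(t), where (p_{N-1},p_{N-1}) = √π·2^{-N+1}·(N-1)!. -/

import Mathlib

open Real Finset

/-- Physicists' Hermite polynomials. -/
noncomputable def physHermite : ℕ → ℝ → ℝ
  | 0 => fun _ => 1
  | 1 => fun x => 2 * x
  | (n + 2) => fun x => 2 * x * physHermite (n + 1) x - 2 * (n + 1) * physHermite n x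

/-- Hermite wave function `ψ_n(x) = e^{-x²/2} 2^{-n} H_n(x)`. -/
noncomputable def psiH (n : ℕ) (x : ℝ) : ℝ :=
  Real.exp (-x ^ 2 / 2) * physHermite n x / 2 ^ n

/-- GUE correlation kernel `K_N(x,y) = Σ_{n<N} ψ_n(x)ψ_n(y) / (√π n!/2ⁿ)`. -/
noncomputable def kerGUE (N : ℕ) (x y : ℝ) : ℝ :=
  ∑ n ∈ Finset.range N, psiH n x * psiH n y / (Real.sqrt Real.pi * (Nat.factorial n) / 2 ^ n)

/-!
Monic normalisation turns the Hermite relations into `ψ_{n+1} = x ψ_n - (n/2) ψ_{n-1}` and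
`ψ_n' = n ψ_{n-1} - x ψ_n`, hence `ψ_n' = (n/2) ψ_{n-1} - ψ_{n+1}`. With `h_n = (p_n, p_n)`,
which satisfies `h_{n+1} = (n+1)/2 · h_n`, the derivative of `ψ_n(t)² / h_n` becomes
`C_n - C_{n+1}` for `C_n = n ψ_n ψ_{n-1} / h_n`, so the sum over `n < N` telescopes to
`-C_N = -(2 / h_{N-1}) ψ_N ψ_{N-1}`.
-/

/-- The squared norm `(p_n, p_n) = √π n! / 2ⁿ` of the monic Hermite polynomial. -/
noncomputable def hermiteSqNorm (n : ℕ) : ℝ :=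
  Real.sqrt Real.pi * n.factorial / 2 ^ n

lemma hermiteSqNorm_pos (n : ℕ) : 0 < hermiteSqNorm n := by
  unfold hermiteSqNorm
  positivity

lemma hermiteSqNorm_succ (n : ℕ) : hermiteSqNorm (n + 1) = (n + 1) / 2 * hermiteSqNorm n := by
  simp only [hermiteSqNorm, Nat.factorial_succ, pow_succ]
  push_cast
  ring

lemma kerGUE_eq_sum (N : ℕ) (x y : ℝ) :
    kerGUE N x y = ∑ n ∈ range N, psiH n x * psiH n y / hermiteSqNorm n :=
  rfl

/-- The truncated `n - 1` is harmless: its coefficient vanishes at `n = 0`. -/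
lemma physHermite_succ (n : ℕ) (x : ℝ) :
    physHermite (n + 1) x = 2 * x * physHermite n x - 2 * n * physHermite (n - 1) x := by
  cases n <;> simp [physHermite]

lemma hasDerivAt_physHermite (n : ℕ) (x : ℝ) :
    HasDerivAt (physHermite n) (2 * n * physHermite (n - 1) x) x := by
  induction n using Nat.twoStepInduction generalizing x with
  | zero => simpa [physHermite] using hasDerivAt_const x (1 : ℝ)
  | one => simpa [physHermite] using (hasDerivAt_id x).const_mul (2 : ℝ)
  | more n ih₁ ih₂ =>
    show HasDerivAt (fun y => 2 * y * physHermite (n + 1) y - 2 * (n + 1) * physHermite n y) _ x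
    refine ((((hasDerivAt_id' x).const_mul 2).mul (ih₂ x)).sub
      ((ih₁ x).const_mul (2 * ((n : ℝ) + 1)))).congr_deriv ?_
    simp only [Nat.add_sub_cancel]
    push_cast
    linear_combination (-2 * ((n : ℝ) + 1)) * physHermite_succ n x

lemma psiH_succ (n : ℕ) (x : ℝ) :
    psiH (n + 1) x = x * psiH n x - n / 2 * psiH (n - 1) x := by
  rcases n with _ | n
  · simp [psiH, physHermite]
    ring
  · simp only [psiH, physHermite_succ (n + 1) x, Nat.add_sub_cancel, pow_succ]
    push_cast
    field_simp

lemma hasDerivAt_psiH (n : ℕ) (x : ℝ) :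
    HasDerivAt (psiH n) (n / 2 * psiH (n - 1) x - psiH (n + 1) x) x := by
  have hgauss : HasDerivAt (fun s : ℝ => Real.exp (-s ^ 2 / 2)) (Real.exp (-x ^ 2 / 2) * -x) x :=
    ((hasDerivAt_pow 2 x).neg.div_const 2).exp.congr_deriv (by simp; ring)
  refine ((hgauss.mul (hasDerivAt_physHermite n x)).div_const ((2 : ℝ) ^ n)).congr_deriv ?_
  rw [psiH_succ]
  rcases n with _ | n
  · simp [psiH]
    ring
  · simp only [psiH, Nat.add_sub_cancel, pow_succ]
    push_cast
    field_simp
    ring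

lemma hasDerivAt_psiH_sq_div_hermiteSqNorm (n : ℕ) (t : ℝ) :
    HasDerivAt (fun s => psiH n s * psiH n s / hermiteSqNorm n)
      (n * psiH n t * psiH (n - 1) t / hermiteSqNorm n
        - (n + 1 : ℕ) * psiH (n + 1) t * psiH n t / hermiteSqNorm (n + 1)) t := by
  have hn := (hermiteSqNorm_pos n).ne'
  refine (((hasDerivAt_psiH n t).mul (hasDerivAt_psiH n t)).div_const (hermiteSqNorm n)).congr_deriv ?_
  rw [hermiteSqNorm_succ]
  push_cast
  field_simp
  ring

/-- Diagonal derivative identity: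
`d/dt K_N(t,t) = -(2/(√π 2^{-N+1} (N-1)!)) ψ_N(t) ψ_{N-1}(t)`. -/
theorem stmt_9 (N : ℕ) (hN : 1 ≤ N) (t : ℝ) :
    deriv (fun s => kerGUE N s s) t =
      -(2 / (Real.sqrt Real.pi * (2 : ℝ) ^ (-(N : ℝ) + 1) * (Nat.factorial (N - 1)))) *
        psiH N t * psiH (N - 1) t := by
  obtain ⟨M, rfl⟩ : ∃ M, N = M + 1 := ⟨N - 1, by omega⟩
  set C : ℕ → ℝ := fun n => n * psiH n t * psiH (n - 1) t / hermiteSqNorm n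
  have hK : HasDerivAt (fun s => kerGUE (M + 1) s s) (∑ n ∈ range (M + 1), (C n - C (n + 1))) t := by
    simp only [kerGUE_eq_sum]
    exact HasDerivAt.fun_sum fun n _ => hasDerivAt_psiH_sq_div_hermiteSqNorm n t
  have hpow : (2 : ℝ) ^ (-((M + 1 : ℕ) : ℝ) + 1) = ((2 : ℝ) ^ M)⁻¹ := by
    rw [show -((M + 1 : ℕ) : ℝ) + 1 = -(M : ℝ) by push_cast; ring, Real.rpow_neg (by norm_num),
      Real.rpow_natCast]
  have hM := (hermiteSqNorm_pos M).ne'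
  rw [hK.deriv, sum_range_sub', hpow]
  simp only [C, hermiteSqNorm_succ, Nat.add_sub_cancel, CharP.cast_eq_zero, zero_mul, zero_div,
    zero_sub]
  simp only [hermiteSqNorm] at hM ⊢
  push_cast
  field_simp
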